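/- Let k ≥ 0 and n ≥ 2k, and let λ[n] = (n−k, 1^k) ⊢ n be the hook partition with first part n−k and k parts equal to 1. Then for every w ∈ 𝔖_n, χ^{λ[n]}(w) = (−1)^k Σ_{j=0}^{k} Σ_{μ ⊨ j} (−1)^{ℓ(μ)} ζ^μ(w), where the inner sum is over all compositions μ of j (with the empty composition of 0 contributing ζ = 1). -/

import Mathlib

open scoped Classical

/-- A finset `s ⊆ Fin n` is a cycle (orbit) of the permutation `w`;
fixed points count as cycles of length 1. -/
def IsCycleSetOf {n : ℕ} (w : Equiv.Perm (Fin n)) (s : Finset (Fin n)) : Prop :=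
  ∃ x : Fin n, ∀ y : Fin n, y ∈ s ↔ w.SameCycle x y

/-- The finset of cycles (orbits) of `w`, fixed points included as 1-cycles. -/
noncomputable def cyclesOf {n : ℕ} (w : Equiv.Perm (Fin n)) : Finset (Finset (Fin n)) :=
  Finset.univ.filter (IsCycleSetOf w)

/-- `cycCount w i` is `c_i(w)`, the number of cycles of `w` of length `i`. -/
noncomputable def cycCount {n : ℕ} (w : Equiv.Perm (Fin n)) (i : ℕ) : ℕ :=
  ((cyclesOf w).filter fun s => s.card = i).card

/-- The cycle type of `w` as a multiset, fixed points included as parts equal to 1. -/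
noncomputable def fullCycleType {n : ℕ} (w : Equiv.Perm (Fin n)) : Multiset ℕ :=
  (cyclesOf w).val.map Finset.card

/-- `zeta w lam` is `ζ^lam(w)`, the number of ordered brick tilings of the
composition/partition `lam` (given as a list of parts) by `w`:  tuples
`(S_1, …, S_r)` of pairwise disjoint sets of cycles of `w` such that the lengths of the
cycles in `S_j` sum to `lam_j`. -/
noncomputable def zeta {n : ℕ} (w : Equiv.Perm (Fin n)) (lam : List ℕ) : ℕ :=
  Nat.card {L : Fin lam.length → Finset (Finset (Fin n)) //
    (∀ i, ∀ c ∈ L i, c ∈ cyclesOf w) ∧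
    (∀ i j, i ≠ j → Disjoint (L i) (L j)) ∧
    ∀ i, (L i).sum Finset.card = lam.get i}

/-- `xi w mu` is `ξ^mu(w)`, the number of unordered brick tilings of `mu`
(a multiset of parts) by `w`: sets of pairwise disjoint nonempty sets of cycles of `w`
whose multiset of total lengths is `mu`. -/
noncomputable def xi {n : ℕ} (w : Equiv.Perm (Fin n)) (mu : Multiset ℕ) : ℕ :=
  Nat.card {T : Finset (Finset (Finset (Fin n))) //
    (∀ S ∈ T, ∀ c ∈ S, c ∈ cyclesOf w) ∧
    (∀ S ∈ T, S.Nonempty) ∧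
    ((T : Set (Finset (Finset (Fin n)))).Pairwise Disjoint) ∧
    T.val.map (fun S => S.sum Finset.card) = mu}

/-- `eta w mu` is `η^mu(w)`, the number of unordered crackless brick tilings of `mu`
by `w`: sets of distinct cycles of `w` whose multiset of lengths is `mu`. -/
noncomputable def eta {n : ℕ} (w : Equiv.Perm (Fin n)) (mu : Multiset ℕ) : ℕ :=
  Nat.card {T : Finset (Finset (Fin n)) //
    (∀ c ∈ T, c ∈ cyclesOf w) ∧ T.val.map Finset.card = mu}

/-- The irreducible character value `χ^lam(w)` defined via Frobenius's formula:
the coefficient of `x_1^{lam_1+ℓ-1} ⋯ x_ℓ^{lam_ℓ}` in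
`∏_{i<j}(x_i - x_j) · ∏_{cycles c of w} (x_1^{|c|} + ⋯ + x_ℓ^{|c|})`. -/
noncomputable def chiFrob {n : ℕ} (w : Equiv.Perm (Fin n)) (lam : List ℕ) : ℤ :=
  MvPolynomial.coeff
    (Finsupp.equivFunOnFinite.symm fun i : Fin lam.length =>
      lam.get i + (lam.length - 1 - (i : ℕ)))
    ((∏ p ∈ Finset.univ.filter (fun p : Fin lam.length × Fin lam.length => p.1 < p.2),
        (MvPolynomial.X p.1 - MvPolynomial.X p.2)) *
      ∏ c ∈ cyclesOf w, ∑ i : Fin lam.length,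
        (MvPolynomial.X i : MvPolynomial (Fin lam.length) ℤ) ^ c.card)

/-!
Expand the Vandermonde product as the alternant `∑ σ, sign σ • x ^ (σ ∘ rev)`. Then `χ^λ(w)`
is a signed sum, over permutations, of coefficients of `x ^ (α - σ ∘ rev)` in the power-sum
product `p_w = ∏_c (x₀ ^ |c| + ⋯ + x_k ^ |c|)`, where `α = (n, k, k - 1, …, 1)` is the
exponent of the hook. Writing `σ = π * finRotate` (sign `(-1) ^ k`) and reversing the variables
`1, …, k`, `α` becomes `(n, 1, 2, …, k)` and `σ ∘ rev` becomes `π`, so only the `π` with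
`π s ≤ s` for `s ≠ 0` survive. These are exactly the cycles `0 ↦ s₀ ↦ s₁ ↦ ⋯ ↦ s_{r-1} ↦ 0`
through the suffix sums of a composition `μ` of some `j ≤ k`, of sign `(-1) ^ ℓ(μ)`. The
remaining exponent puts `μ_t` on the variable of `s_t`, `n - j` on `x₀` and `0` elsewhere, and
the coefficient of such a monomial in `p_w` counts the assignments of the cycles of `w` to
variables realising it, i.e. the ordered brick tilings of `μ`.
-/

open Equiv Equiv.Perm MvPolynomial Finset

section Cycles

variable {n : ℕ} (w : Perm (Fin n))

theorem cyclesOf_eq_parts_ofSetoid :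
    cyclesOf w = (Finpartition.ofSetoid (SameCycle.setoid w)).parts := by
  ext s
  rw [Finpartition.ofSetoid, Finpartition.ofSetSetoid_parts]
  simp only [cyclesOf, IsCycleSetOf, mem_filter, mem_univ, true_and, mem_image]
  constructor
  · rintro ⟨x, hx⟩
    exact ⟨x, by ext y; simp only [hx y, mem_filter, mem_univ, true_and]; rfl⟩
  · rintro ⟨x, rfl⟩
    exact ⟨x, fun y => by simp only [mem_filter, mem_univ, true_and]; rfl⟩

theorem sum_card_cyclesOf : ∑ c ∈ cyclesOf w, c.card = n := by
  rw [cyclesOf_eq_parts_ofSetoid, Finpartition.sum_card_parts, card_univ, Fintype.card_fin]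

theorem card_pos_of_mem_cyclesOf {c : Finset (Fin n)} (hc : c ∈ cyclesOf w) : 0 < c.card := by
  rw [cyclesOf_eq_parts_ofSetoid] at hc
  exact (Finpartition.nonempty_of_mem_parts _ hc).card_pos

end Cycles

section PowerSums

variable {ι σ : Type*} [Fintype ι]

noncomputable def fiberSum (d : ι → ℕ) (g : ι → σ) : σ →₀ ℕ :=
  ∑ c, Finsupp.single (g c) (d c)

theorem fiberSum_apply [DecidableEq σ] (d : ι → ℕ) (g : ι → σ) (x : σ) :
    fiberSum d g x = ∑ c with g c = x, d c := by
  simp [fiberSum, Finsupp.finsetSum_apply, Finsupp.single_apply, sum_filter]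

theorem sum_fiberSum_apply [Fintype σ] (d : ι → ℕ) (g : ι → σ) :
    ∑ x, fiberSum d g x = ∑ c, d c := by
  classical
  simp_rw [fiberSum_apply]
  exact sum_fiberwise univ g d

theorem coeff_prod_sum_X_pow {α R : Type*} [DecidableEq α] [CommSemiring R] [Fintype σ]
    [DecidableEq σ] (s : Finset α) (d : α → ℕ) (e : σ →₀ ℕ) :
    coeff e (∏ c ∈ s, ∑ i, (X i : MvPolynomial σ R) ^ d c) =
      #{g : s → σ | fiberSum (fun c : s => d c) g = e} := by
  rw [← prod_coe_sort, Fintype.prod_sum]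
  simp_rw [X_pow_eq_monomial, ← monomial_sum_one, coeff_sum, coeff_monomial]
  rw [sum_boole]
  rfl

end PowerSums

theorem Finsupp.eq_of_sum_eq_of_forall_ne {σ M : Type*} [Fintype σ] [AddCancelCommMonoid M]
    {f f' : σ →₀ M} (a : σ) (hsum : ∑ x, f x = ∑ x, f' x) (h : ∀ x ≠ a, f x = f' x) :
    f = f' := by
  classical
  have hrest : ∑ x ∈ univ.erase a, f x = ∑ x ∈ univ.erase a, f' x :=
    Finset.sum_congr rfl fun x hx => h x (ne_of_mem_erase hx)
  ext x
  by_cases hx : x = a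
  · subst hx
    rw [← Finset.add_sum_erase _ _ (mem_univ x), ← Finset.add_sum_erase _ _ (mem_univ x),
      hrest] at hsum
    exact add_right_cancel hsum
  · exact h x hx

section Tilings

variable {n : ℕ} {w : Perm (Fin n)} {σ : Type*}

def IsBrickTiling (w : Perm (Fin n)) (l : List ℕ) (L : Fin l.length → Finset (Finset (Fin n))) :
    Prop :=
  (∀ i, ∀ c ∈ L i, c ∈ cyclesOf w) ∧ (∀ i j, i ≠ j → Disjoint (L i) (L j)) ∧
    ∀ i, (L i).sum Finset.card = l.get i

theorem zeta_eq_card_isBrickTiling (w : Perm (Fin n)) (l : List ℕ) :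
    zeta w l = Nat.card {L // IsBrickTiling w l L} := rfl

variable {r : ℕ}

noncomputable def toTiling [DecidableEq σ] (pos : Fin r → σ) (g : cyclesOf w → σ)
    (t : Fin r) : Finset (Finset (Fin n)) :=
  (univ.filter fun c => g c = pos t).map (Function.Embedding.subtype _)

noncomputable def ofTiling (i₀ : σ) (pos : Fin r → σ) (L : Fin r → Finset (Finset (Fin n)))
    (c : cyclesOf w) : σ :=
  if h : ∃ t, c.1 ∈ L t then pos h.choose else i₀

variable {i₀ : σ} {pos : Fin r → σ}

theorem ofTiling_of_mem {L : Fin r → Finset (Finset (Fin n))}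
    (hdisj : ∀ i j, i ≠ j → Disjoint (L i) (L j)) {c : cyclesOf w} {t : Fin r}
    (hc : c.1 ∈ L t) : ofTiling i₀ pos L c = pos t := by
  have h : ∃ t, c.1 ∈ L t := ⟨t, hc⟩
  rw [ofTiling, dif_pos h]
  by_contra hne
  exact disjoint_left.mp (hdisj _ _ fun h' => hne (congrArg pos h')) h.choose_spec hc

theorem ofTiling_of_forall_notMem {L : Fin r → Finset (Finset (Fin n))} {c : cyclesOf w}
    (hc : ∀ t, c.1 ∉ L t) : ofTiling i₀ pos L c = i₀ := by
  rw [ofTiling, dif_neg (not_exists.mpr hc)]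

theorem ofTiling_eq_or_exists (L : Fin r → Finset (Finset (Fin n))) (c : cyclesOf w) :
    ofTiling i₀ pos L c = i₀ ∨ ∃ t, ofTiling i₀ pos L c = pos t := by
  unfold ofTiling
  split_ifs
  exacts [Or.inr ⟨_, rfl⟩, Or.inl rfl]

variable [DecidableEq σ]

theorem mem_toTiling {g : cyclesOf w → σ} {t : Fin r} {s : Finset (Fin n)} :
    s ∈ toTiling pos g t ↔ ∃ h : s ∈ cyclesOf w, g ⟨s, h⟩ = pos t := by
  simp [toTiling]

theorem sum_card_toTiling (g : cyclesOf w → σ) (t : Fin r) :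
    (toTiling pos g t).sum Finset.card = fiberSum (fun c : cyclesOf w => c.1.card) g (pos t) := by
  rw [toTiling, sum_map, fiberSum_apply]
  rfl

theorem disjoint_toTiling (hinj : Function.Injective pos) (g : cyclesOf w → σ) {t t' : Fin r}
    (h : t ≠ t') : Disjoint (toTiling pos g t) (toTiling pos g t') := by
  refine disjoint_left.mpr fun s hs hs' => h (hinj ?_)
  obtain ⟨_, hs⟩ := mem_toTiling.mp hs
  obtain ⟨_, hs'⟩ := mem_toTiling.mp hs'
  rw [← hs, ← hs']

theorem toTiling_ofTiling (hinj : Function.Injective pos) (hi₀ : ∀ t, pos t ≠ i₀)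
    {L : Fin r → Finset (Finset (Fin n))} (hmem : ∀ i, ∀ c ∈ L i, c ∈ cyclesOf w)
    (hdisj : ∀ i j, i ≠ j → Disjoint (L i) (L j)) :
    toTiling pos (ofTiling i₀ pos L : cyclesOf w → σ) = L := by
  ext t s
  rw [mem_toTiling]
  constructor
  · rintro ⟨hs, hst⟩
    by_cases h : ∃ t', s ∈ L t'
    · obtain ⟨t', ht'⟩ := h
      rw [ofTiling_of_mem hdisj (c := ⟨s, hs⟩) ht'] at hst
      rwa [← hinj hst]
    · rw [ofTiling_of_forall_notMem (not_exists.mp h)] at hst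
      exact absurd hst.symm (hi₀ t)
  · intro hs
    exact ⟨hmem t s hs, ofTiling_of_mem hdisj hs⟩

theorem ofTiling_toTiling (hinj : Function.Injective pos) (hi₀ : ∀ t, pos t ≠ i₀)
    {g : cyclesOf w → σ} (hg : ∀ c, g c = i₀ ∨ ∃ t, g c = pos t) :
    ofTiling i₀ pos (toTiling pos g) = g := by
  funext c
  rcases hg c with hc | ⟨t, hc⟩
  · rw [ofTiling_of_forall_notMem, hc]
    intro t ht
    obtain ⟨_, hct⟩ := mem_toTiling.mp ht
    exact hi₀ t (hct.symm.trans hc)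
  · rw [ofTiling_of_mem (fun _ _ => disjoint_toTiling hinj g) (mem_toTiling.mpr ⟨c.2, hc⟩), hc]

theorem eq_or_exists_of_fiberSum_eq {e : σ →₀ ℕ}
    (hzero : ∀ x ≠ i₀, (∀ t, pos t ≠ x) → e x = 0) {g : cyclesOf w → σ}
    (hg : fiberSum (fun c : cyclesOf w => c.1.card) g = e) (c : cyclesOf w) :
    g c = i₀ ∨ ∃ t, g c = pos t := by
  by_contra! h
  have hle : c.1.card ≤ fiberSum (fun c : cyclesOf w => c.1.card) g (g c) := by
    rw [fiberSum_apply]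
    exact single_le_sum (f := fun c : cyclesOf w => c.1.card) (fun _ _ => Nat.zero_le _)
      (mem_filter.mpr ⟨mem_univ c, rfl⟩)
  rw [hg, hzero _ h.1 fun t ht => h.2 t ht.symm] at hle
  exact (card_pos_of_mem_cyclesOf w c.2).ne' (Nat.le_zero.mp hle)

variable [Fintype σ] {l : List ℕ} {pos : Fin l.length → σ} {e : σ →₀ ℕ}

theorem fiberSum_ofTiling (hinj : Function.Injective pos) (hi₀ : ∀ t, pos t ≠ i₀)
    (he : ∀ t, e (pos t) = l.get t) (hzero : ∀ x ≠ i₀, (∀ t, pos t ≠ x) → e x = 0)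
    (hsum : ∑ x, e x = n) {L : Fin l.length → Finset (Finset (Fin n))}
    (hL : IsBrickTiling w l L) :
    fiberSum (fun c : cyclesOf w => c.1.card) (ofTiling i₀ pos L) = e := by
  obtain ⟨hmem, hdisj, hcard⟩ := hL
  refine Finsupp.eq_of_sum_eq_of_forall_ne i₀ ?_ fun x hx => ?_
  · rw [hsum, sum_fiberSum_apply, sum_coe_sort (cyclesOf w) Finset.card, sum_card_cyclesOf]
  by_cases hxt : ∃ t, pos t = x
  · obtain ⟨t, rfl⟩ := hxt
    rw [← sum_card_toTiling, toTiling_ofTiling hinj hi₀ hmem hdisj, hcard, he]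
  · rw [hzero x hx (not_exists.mp hxt), fiberSum_apply]
    refine sum_eq_zero fun c hc => absurd (mem_filter.mp hc).2 ?_
    rcases ofTiling_eq_or_exists (i₀ := i₀) (pos := pos) L c with h | ⟨t, h⟩ <;> rw [h]
    exacts [hx.symm, fun h' => hxt ⟨t, h'⟩]

theorem card_fiberSum_eq_zeta (hinj : Function.Injective pos) (hi₀ : ∀ t, pos t ≠ i₀)
    (he : ∀ t, e (pos t) = l.get t) (hzero : ∀ x ≠ i₀, (∀ t, pos t ≠ x) → e x = 0)
    (hsum : ∑ x, e x = n) :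
    #{g : cyclesOf w → σ | fiberSum (fun c : cyclesOf w => c.1.card) g = e} = zeta w l := by
  let tilings : {g : cyclesOf w → σ // fiberSum (fun c : cyclesOf w => c.1.card) g = e} ≃
      {L // IsBrickTiling w l L} :=
    { toFun := fun g => ⟨toTiling pos g.1,
        fun t s hs => (mem_toTiling.mp hs).1, fun _ _ => disjoint_toTiling hinj g.1,
        fun t => by rw [sum_card_toTiling, g.2, he]⟩
      invFun := fun L => ⟨ofTiling i₀ pos L.1, fiberSum_ofTiling hinj hi₀ he hzero hsum L.2⟩
      left_inv := fun g => Subtype.ext <|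
        ofTiling_toTiling hinj hi₀ (eq_or_exists_of_fiberSum_eq hzero g.2)
      right_inv := fun L => Subtype.ext <| toTiling_ofTiling hinj hi₀ L.2.1 L.2.2.1 }
  rw [zeta_eq_card_isBrickTiling, ← Nat.card_congr tilings, Nat.card_eq_fintype_card,
    Fintype.card_subtype]

end Tilings

theorem prod_filter_lt_eq_prod_prod_Ioi {m : ℕ} {M : Type*} [CommMonoid M]
    (f : Fin m → Fin m → M) :
    ∏ p ∈ univ.filter (fun p : Fin m × Fin m => p.1 < p.2), f p.1 p.2 =
      ∏ i, ∏ j ∈ Ioi i, f i j := by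
  rw [prod_filter, Fintype.prod_prod_type]
  simp only [← prod_filter, filter_lt_eq_Ioi]

theorem prod_X_sub_X_eq_sum_sign_smul (m : ℕ) (R : Type*) [CommRing R] :
    ∏ p ∈ univ.filter (fun p : Fin m × Fin m => p.1 < p.2),
        (X p.1 - X p.2 : MvPolynomial (Fin m) R) =
      ∑ σ : Perm (Fin m),
        sign σ • monomial (Finsupp.equivFunOnFinite.symm fun y => (σ (Fin.rev y) : ℕ)) 1 := by
  have hrev : ∏ p ∈ univ.filter (fun p : Fin m × Fin m => p.1 < p.2),
        (X p.1 - X p.2 : MvPolynomial (Fin m) R) =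
      ∏ p ∈ univ.filter (fun p : Fin m × Fin m => p.1 < p.2), (X p.2.rev - X p.1.rev) :=
    prod_nbij' (fun p => (p.2.rev, p.1.rev)) (fun p => (p.2.rev, p.1.rev))
      (by simp) (by simp) (by simp) (by simp) (by simp)
  rw [hrev, prod_filter_lt_eq_prod_prod_Ioi (fun i j => X j.rev - X i.rev),
    ← Matrix.det_vandermonde (fun i => X i.rev), ← Matrix.det_transpose, Matrix.det_apply]
  refine Fintype.sum_congr _ _ fun σ => ?_
  rw [monomial_eq, C_1, one_mul, Finsupp.prod_fintype _ _ (fun _ => pow_zero _)]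
  simp only [Matrix.transpose_apply, Matrix.vandermonde_apply,
    Finsupp.coe_equivFunOnFinite_symm]
  rw [← Equiv.prod_comp Fin.revPerm]
  simp

section SuffixSums

variable {l : List ℕ}

theorem List.sum_drop_le (l : List ℕ) (t : ℕ) : (l.drop t).sum ≤ l.sum :=
  Nat.le.intro (by rw [add_comm, List.sum_take_add_sum_drop])

theorem List.sum_drop_eq_getElem_add {t : ℕ} (ht : t < l.length) :
    (l.drop t).sum = l[t] + (l.drop (t + 1)).sum := by
  rw [List.drop_eq_getElem_cons ht, List.sum_cons]

theorem List.sum_drop_pos (hl : ∀ b ∈ l, 0 < b) {t : ℕ} (ht : t < l.length) :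
    0 < (l.drop t).sum := by
  rw [List.sum_drop_eq_getElem_add ht]
  exact Nat.add_pos_left (hl _ (List.getElem_mem ht)) _

theorem List.sum_drop_lt_sum_drop (hl : ∀ b ∈ l, 0 < b) {t t' : ℕ} (h : t < t')
    (ht' : t' < l.length) : (l.drop t').sum < (l.drop t).sum := by
  have hle : (l.drop t').sum ≤ (l.drop (t + 1)).sum := by
    rw [show t' = t + 1 + (t' - (t + 1)) by omega, ← List.drop_drop]
    exact List.sum_drop_le _ _
  rw [List.sum_drop_eq_getElem_add (h.trans ht')]
  have := hl _ (List.getElem_mem (h.trans ht'))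
  omega

theorem List.eq_of_sum_drop_eq (hl : ∀ b ∈ l, 0 < b) {t t' : ℕ} (ht : t < l.length)
    (ht' : t' < l.length) (h : (l.drop t).sum = (l.drop t').sum) : t = t' := by
  rcases lt_trichotomy t t' with htt | rfl | htt
  · exact absurd h (List.sum_drop_lt_sum_drop hl htt ht').ne'
  · rfl
  · exact absurd h (List.sum_drop_lt_sum_drop hl htt ht).ne

end SuffixSums

section DescendingCycles

open Fin.NatCast

theorem Fin.natCast_ne_zero_of_pos {k a : ℕ} (ha : 0 < a) (hak : a ≤ k) :
    (a : Fin (k + 1)) ≠ 0 := by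
  rw [Ne, Fin.ext_iff, Fin.val_cast_of_lt (by omega)]
  exact ha.ne'

theorem Equiv.Perm.eq_one_of_forall_le {m : ℕ} {π : Perm (Fin m)} (h : ∀ x, π x ≤ x) :
    π = 1 := by
  have hsum : ∑ x, (π x : ℕ) = ∑ x : Fin m, (x : ℕ) := Equiv.sum_comp π (Fin.val ·)
  ext x
  exact (sum_eq_sum_iff_of_le fun x _ => Fin.le_def.mp (h x)).mp hsum x (mem_univ x)

variable (k : ℕ)

/-- For `l = [l₀, …, l_{r-1}]` with suffix sums `s_t = l_t + ⋯ + l_{r-1}`, the cycle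
`0 ↦ s₀ ↦ s₁ ↦ ⋯ ↦ s_{r-1} ↦ 0` of `Fin (k + 1)`. -/
def descCycle : List ℕ → Perm (Fin (k + 1))
  | [] => 1
  | a :: l => descCycle l * swap 0 ((a + l.sum : ℕ) : Fin (k + 1))

variable {k} {l : List ℕ} (hl : ∀ b ∈ l, 0 < b)
include hl

theorem descCycle_apply_of_sum_lt {x : Fin (k + 1)} (hx : l.sum < x) : descCycle k l x = x := by
  induction l with
  | nil => rfl
  | cons a l ih =>
    have ha := hl a List.mem_cons_self
    simp only [List.sum_cons] at hx
    have hx0 : x ≠ 0 := by rintro rfl; simp at hx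
    have hxs : x ≠ ((a + l.sum : ℕ) : Fin (k + 1)) := by
      rintro rfl
      rw [Fin.val_cast_of_lt (by omega)] at hx
      omega
    rw [descCycle, Perm.mul_apply, swap_apply_of_ne_of_ne hx0 hxs,
      ih (fun b hb => hl b (List.mem_cons_of_mem a hb)) (by omega)]

theorem descCycle_apply_of_forall_ne {x : Fin (k + 1)} (hx0 : x ≠ 0)
    (hx : ∀ t < l.length, x ≠ (l.drop t).sum) : descCycle k l x = x := by
  induction l with
  | nil => rfl
  | cons a l ih =>
    have hxs : x ≠ ((a + l.sum : ℕ) : Fin (k + 1)) := by simpa using hx 0 (by simp)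
    rw [descCycle, Perm.mul_apply, swap_apply_of_ne_of_ne hx0 hxs,
      ih (fun b hb => hl b (List.mem_cons_of_mem a hb))
        fun t ht => by simpa using hx (t + 1) (by simpa using ht)]

variable (hk : l.sum ≤ k)
include hk

theorem descCycle_apply_zero : descCycle k l 0 = l.sum := by
  cases l with
  | nil => rfl
  | cons a l =>
    have ha := hl a List.mem_cons_self
    simp only [List.sum_cons] at hk ⊢
    rw [descCycle, Perm.mul_apply, swap_apply_left,
      descCycle_apply_of_sum_lt (fun b hb => hl b (List.mem_cons_of_mem a hb))]
    rw [Fin.val_cast_of_lt (by omega)]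
    omega

theorem val_descCycle_apply_zero : (descCycle k l 0 : ℕ) = l.sum := by
  rw [descCycle_apply_zero hl hk, Fin.val_cast_of_lt (by omega)]

theorem descCycle_apply_sum_drop {t : ℕ} (ht : t < l.length) :
    descCycle k l (l.drop t).sum = (l.drop (t + 1)).sum := by
  induction l generalizing t with
  | nil => simp at ht
  | cons a l ih =>
    have hl' : ∀ b ∈ l, 0 < b := fun b hb => hl b (List.mem_cons_of_mem a hb)
    simp only [List.sum_cons] at hk
    cases t with
    | zero =>
      rw [List.drop_zero, List.sum_cons, descCycle, Perm.mul_apply, swap_apply_right,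
        descCycle_apply_zero hl' (by omega), List.drop_one, List.tail_cons]
    | succ t =>
      have ht' : t < l.length := by simpa using ht
      have hpos := List.sum_drop_pos hl' ht'
      have hle := List.sum_drop_le l t
      have hne : ((l.drop t).sum : Fin (k + 1)) ≠ ((a + l.sum : ℕ) : Fin (k + 1)) := by
        rw [Ne, Fin.ext_iff, Fin.val_cast_of_lt (by omega), Fin.val_cast_of_lt (by omega)]
        have := hl a List.mem_cons_self
        omega
      rw [List.drop_succ_cons, List.drop_succ_cons, descCycle, Perm.mul_apply,
        swap_apply_of_ne_of_ne (Fin.natCast_ne_zero_of_pos hpos (by omega)) hne,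
        ih hl' (by omega) ht']

theorem descCycle_apply_le {x : Fin (k + 1)} (hx0 : x ≠ 0) : descCycle k l x ≤ x := by
  induction l with
  | nil => exact le_rfl
  | cons a l ih =>
    have hl' : ∀ b ∈ l, 0 < b := fun b hb => hl b (List.mem_cons_of_mem a hb)
    simp only [List.sum_cons] at hk
    rw [descCycle, Perm.mul_apply]
    by_cases hxs : x = ((a + l.sum : ℕ) : Fin (k + 1))
    · rw [hxs, swap_apply_right, descCycle_apply_zero hl' (by omega), Fin.le_def,
        Fin.val_cast_of_lt (by omega), Fin.val_cast_of_lt (by omega)]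
      omega
    · rw [swap_apply_of_ne_of_ne hx0 hxs]
      exact ih hl' (by omega)

theorem sign_descCycle : sign (descCycle k l) = (-1) ^ l.length := by
  induction l with
  | nil => simp [descCycle]
  | cons a l ih =>
    have ha := hl a List.mem_cons_self
    simp only [List.sum_cons] at hk
    rw [descCycle, Perm.sign_mul, sign_swap (Fin.natCast_ne_zero_of_pos (by omega) hk).symm,
      ih (fun b hb => hl b (List.mem_cons_of_mem a hb)) (by omega), List.length_cons, pow_succ]

theorem descCycle_injective {l' : List ℕ} (hl' : ∀ b ∈ l', 0 < b) (hk' : l'.sum ≤ k)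
    (h : descCycle k l = descCycle k l') : l = l' := by
  have hsum : l.sum = l'.sum := by
    rw [← val_descCycle_apply_zero hl hk, ← val_descCycle_apply_zero hl' hk', h]
  induction l generalizing l' with
  | nil =>
    cases l' with
    | nil => rfl
    | cons a' l' =>
      have := hl' a' List.mem_cons_self
      simp only [List.sum_nil, List.sum_cons] at hsum
      omega
  | cons a l ih =>
    cases l' with
    | nil =>
      have := hl a List.mem_cons_self
      simp only [List.sum_nil, List.sum_cons] at hsum
      omega
    | cons a' l' =>
      simp only [List.sum_cons] at hk hk' hsum
      have hl₀ : ∀ b ∈ l, 0 < b := fun b hb => hl b (List.mem_cons_of_mem a hb)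
      have hl₀' : ∀ b ∈ l', 0 < b := fun b hb => hl' b (List.mem_cons_of_mem a' hb)
      have hk₀ : l.sum ≤ k := by omega
      have hk₀' : l'.sum ≤ k := by omega
      rw [descCycle, descCycle, hsum] at h
      have htail := mul_right_cancel h
      obtain rfl := ih hl₀ hk₀ hl₀' hk₀' htail <| by
        rw [← val_descCycle_apply_zero hl₀ hk₀, htail, val_descCycle_apply_zero hl₀' hk₀']
      rw [show a = a' by omega]

omit hl hk in
theorem exists_descCycle_eq (π : Perm (Fin (k + 1))) (hπ : ∀ x ≠ 0, π x ≤ x) :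
    ∃ l : List ℕ, (∀ b ∈ l, 0 < b) ∧ l.sum ≤ k ∧ descCycle k l = π := by
  induction hj : (π 0 : ℕ) using Nat.strong_induction_on generalizing π with
  | _ j ih =>
  rcases Nat.eq_zero_or_pos j with rfl | hj0
  · refine ⟨[], by simp, by simp, (Perm.eq_one_of_forall_le fun x => ?_).symm⟩
    rcases eq_or_ne x 0 with rfl | hx
    · exact Fin.le_def.mpr hj.le
    · exact hπ x hx
  set y := π 0 with hy
  have hy0 : y ≠ 0 := Fin.val_ne_zero_iff.mp (by omega)
  -- `π = π' * swap 0 y`, where `π'` still satisfies the bound and sends `0` below `y`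
  set π' := π * swap 0 y
  have hπ' : ∀ x ≠ 0, π' x ≤ x := by
    intro x hx
    by_cases hxy : x = y
    · rw [hxy, Perm.mul_apply, swap_apply_right]
    · rw [Perm.mul_apply, swap_apply_of_ne_of_ne hx hxy]
      exact hπ x hx
  have hlt : (π' 0 : ℕ) < j := by
    have hne : π y ≠ y := fun h => hy0 (π.injective (h.trans hy))
    rw [Perm.mul_apply, swap_apply_left, ← hj]
    exact Fin.lt_def.mp (lt_of_le_of_ne (hπ y hy0) hne)
  obtain ⟨l, hl, hk, hπl⟩ := ih _ hlt π' hπ' rfl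
  have hsum := val_descCycle_apply_zero hl hk
  rw [hπl] at hsum
  refine ⟨(j - l.sum) :: l, ?_, ?_, ?_⟩
  · intro b hb
    rcases List.mem_cons.mp hb with rfl | hb
    exacts [by omega, hl b hb]
  · have := y.isLt
    simp only [List.sum_cons]
    omega
  · rw [descCycle, hπl, show j - l.sum + l.sum = j by omega, ← hj, Fin.cast_val_eq_self,
      mul_assoc, swap_mul_self, mul_one]

end DescendingCycles

section Hook

open Fin.NatCast

variable {n k : ℕ}

def tailRev (k : ℕ) : Perm (Fin (k + 1)) := Fin.revPerm.trans (finRotate (k + 1))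

theorem tailRev_zero : tailRev k 0 = 0 := by
  simp [tailRev]

theorem val_tailRev_of_ne_zero {y : Fin (k + 1)} (hy : y ≠ 0) :
    (tailRev k y : ℕ) = k + 1 - y := by
  have hy' : (y : ℕ) ≠ 0 := Fin.val_ne_zero_iff.mpr hy
  have hlt : y.rev < Fin.last k := by
    rw [Fin.lt_def, Fin.val_rev, Fin.val_last]
    omega
  simp only [tailRev, Equiv.trans_apply, Fin.revPerm_apply, finRotate_apply]
  rw [Fin.val_add_one_of_lt hlt, Fin.val_rev]
  omega

theorem tailRev_symm_eq_zero_iff {x : Fin (k + 1)} : (tailRev k).symm x = 0 ↔ x = 0 := by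
  rw [Equiv.symm_apply_eq, tailRev_zero]

noncomputable def hookExponent (n k : ℕ) : Fin (k + 1) →₀ ℕ :=
  Finsupp.equivFunOnFinite.symm fun y => if y = 0 then n else tailRev k y

noncomputable def tailRevStair (π : Perm (Fin (k + 1))) : Fin (k + 1) →₀ ℕ :=
  Finsupp.equivFunOnFinite.symm fun y => π (tailRev k y)

noncomputable def cyclePowerSum (w : Perm (Fin n)) (m : ℕ) : MvPolynomial (Fin m) ℤ :=
  ∏ c ∈ cyclesOf w, ∑ i : Fin m, X i ^ c.card

theorem hookExponent_apply_symm_tailRev {s : Fin (k + 1)} (hs : s ≠ 0) :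
    hookExponent n k ((tailRev k).symm s) = s := by
  simp [hookExponent, tailRev_symm_eq_zero_iff, hs]

theorem tailRevStair_le_hookExponent (hkn : k ≤ n) {π : Perm (Fin (k + 1))}
    (hπ : ∀ x ≠ 0, π x ≤ x) : tailRevStair π ≤ hookExponent n k := by
  intro y
  simp only [tailRevStair, hookExponent, Finsupp.coe_equivFunOnFinite_symm]
  split_ifs with hy
  · have := (π (tailRev k y)).isLt
    omega
  · exact hπ _ ((tailRev k).injective.ne hy |>.trans_eq tailRev_zero)

theorem sum_hookExponent_sub_tailRevStair {π : Perm (Fin (k + 1))}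
    (hle : tailRevStair π ≤ hookExponent n k) :
    ∑ x, (hookExponent n k - tailRevStair π) x = n := by
  have hexp : ∀ y, hookExponent n k y = (tailRev k y : ℕ) + if y = 0 then n else 0 := by
    intro y
    rcases eq_or_ne y 0 with rfl | hy <;> simp [hookExponent, tailRev_zero, *]
  have hstair : ∑ y, tailRevStair π y = ∑ y, (tailRev k y : ℕ) := by
    simp only [tailRevStair, Finsupp.coe_equivFunOnFinite_symm]
    rw [Equiv.sum_comp (tailRev k) (fun s => (π s : ℕ)), Equiv.sum_comp π (fun s => (s : ℕ)),
      Equiv.sum_comp (tailRev k) (fun s => (s : ℕ))]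
  simp only [Finsupp.coe_tsub, Pi.sub_apply]
  rw [sum_tsub_distrib _ fun y _ => hle y, hstair]
  simp only [hexp, sum_add_distrib, sum_ite_eq', mem_univ, if_true]
  omega

theorem coeff_monomial_tailRevStair_mul_eq_zero (w : Perm (Fin n)) {π : Perm (Fin (k + 1))}
    {x : Fin (k + 1)} (hx0 : x ≠ 0) (hx : x < π x) :
    coeff (hookExponent n k) (monomial (tailRevStair π) (1 : ℤ) * cyclePowerSum w (k + 1)) =
      0 := by
  rw [coeff_monomial_mul', if_neg]
  intro hle
  have := hle ((tailRev k).symm x)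
  rw [hookExponent_apply_symm_tailRev hx0, tailRevStair, Finsupp.coe_equivFunOnFinite_symm,
    Equiv.apply_symm_apply] at this
  exact absurd hx (not_lt.mpr (Fin.le_def.mpr this))

theorem coeff_monomial_tailRevStair_descCycle_mul (hkn : k ≤ n) (w : Perm (Fin n))
    {l : List ℕ} (hl : ∀ b ∈ l, 0 < b) (hk : l.sum ≤ k) :
    coeff (hookExponent n k)
        (monomial (tailRevStair (descCycle k l)) (1 : ℤ) * cyclePowerSum w (k + 1)) =
      zeta w l := by
  have hle := tailRevStair_le_hookExponent hkn fun x hx => descCycle_apply_le hl hk hx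
  rw [coeff_monomial_mul', if_pos hle, one_mul, cyclePowerSum, coeff_prod_sum_X_pow]
  norm_cast
  have hsuffix : ∀ t : Fin l.length, ((l.drop t).sum : Fin (k + 1)) ≠ 0 := fun t =>
    Fin.natCast_ne_zero_of_pos (List.sum_drop_pos hl t.isLt) ((List.sum_drop_le l t).trans hk)
  have hdiff : ∀ {s : Fin (k + 1)}, s ≠ 0 →
      (hookExponent n k - tailRevStair (descCycle k l)) ((tailRev k).symm s) =
        s - descCycle k l s := by
    intro s hs
    simp [hookExponent_apply_symm_tailRev hs, tailRevStair]
  refine card_fiberSum_eq_zeta (i₀ := 0)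
    (pos := fun t : Fin l.length => (tailRev k).symm (l.drop t).sum) ?_ ?_ ?_ ?_
    (sum_hookExponent_sub_tailRevStair hle)
  · intro t t' h
    have h' := congrArg Fin.val ((tailRev k).symm.injective h)
    rw [Fin.val_cast_of_lt (by have := List.sum_drop_le l t; omega),
      Fin.val_cast_of_lt (by have := List.sum_drop_le l t'; omega)] at h'
    exact Fin.ext (List.eq_of_sum_drop_eq hl t.isLt t'.isLt h')
  · exact fun t => tailRev_symm_eq_zero_iff.not.mpr (hsuffix t)
  · intro t
    have hlt := List.sum_drop_le l t
    have hlt' := List.sum_drop_le l (t + 1)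
    rw [hdiff (hsuffix t), descCycle_apply_sum_drop hl hk t.isLt, Fin.val_cast_of_lt (by omega),
      Fin.val_cast_of_lt (by omega), List.sum_drop_eq_getElem_add t.isLt, List.get_eq_getElem]
    omega
  · intro x hx0 hx
    have hs : tailRev k x ≠ 0 := (tailRev k).injective.ne hx0 |>.trans_eq tailRev_zero
    rw [← (tailRev k).symm_apply_apply x, hdiff hs,
      descCycle_apply_of_forall_ne hl hs fun t ht h => hx ⟨t, ht⟩ (by simp [← h]),
      Nat.sub_self]

theorem sum_sign_mul_coeff_hook (hkn : k ≤ n) (w : Perm (Fin n)) :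
    ∑ π : Perm (Fin (k + 1)), (sign π : ℤ) *
        coeff (hookExponent n k) (monomial (tailRevStair π) (1 : ℤ) * cyclePowerSum w (k + 1)) =
      ∑ j ∈ range (k + 1),
        ∑ μ : Composition j, (-1 : ℤ) ^ μ.length * zeta w μ.blocks := by
  have hbound : ∀ x : Σ j : Fin (k + 1), Composition j, x.2.blocks.sum ≤ k := fun x => by
    rw [x.2.blocks_sum]
    exact Nat.lt_succ_iff.mp x.1.isLt
  rw [sum_range fun j => ∑ μ : Composition j, (-1 : ℤ) ^ μ.length * zeta w μ.blocks,
    ← Fintype.sum_sigma fun x : Σ j : Fin (k + 1), Composition j =>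
      (-1 : ℤ) ^ x.2.length * zeta w x.2.blocks]
  symm
  refine Fintype.sum_of_injective (fun x => descCycle k x.2.blocks) ?_ _ _ ?_ fun x => ?_
  · rintro ⟨j, μ⟩ ⟨j', μ'⟩ h
    have hμ := descCycle_injective (fun b => μ.blocks_pos) (hbound ⟨j, μ⟩)
      (fun b => μ'.blocks_pos) (hbound ⟨j', μ'⟩) h
    obtain rfl : j = j' := Fin.ext (by rw [← μ.blocks_sum, ← μ'.blocks_sum, hμ])
    rw [Composition.ext hμ]
  · intro π hπ
    by_cases hS : ∀ x ≠ 0, π x ≤ x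
    · obtain ⟨l, hl, hk, rfl⟩ := exists_descCycle_eq π hS
      exact absurd ⟨⟨⟨l.sum, by omega⟩, ⟨l, fun hb => hl _ hb, rfl⟩⟩, rfl⟩ hπ
    · push Not at hS
      obtain ⟨x, hx0, hx⟩ := hS
      rw [coeff_monomial_tailRevStair_mul_eq_zero w hx0 hx, mul_zero]
  · rw [coeff_monomial_tailRevStair_descCycle_mul hkn w (fun b => x.2.blocks_pos) (hbound x),
      sign_descCycle (fun b => x.2.blocks_pos) (hbound x), Composition.length]
    push_cast
    rfl

theorem coeff_vandermonde_mul_cyclePowerSum_hook {m : ℕ} (hkn : k ≤ n) (w : Perm (Fin n))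
    (hm : m = k + 1) (e : Fin m → ℕ)
    (he : ∀ i : Fin m, e i = if (i : ℕ) = 0 then n else m - i) :
    coeff (Finsupp.equivFunOnFinite.symm e)
        ((∏ p ∈ univ.filter (fun p : Fin m × Fin m => p.1 < p.2), (X p.1 - X p.2)) *
          cyclePowerSum w m) =
      (-1 : ℤ) ^ k * ∑ j ∈ range (k + 1),
        ∑ μ : Composition j, (-1 : ℤ) ^ μ.length * zeta w μ.blocks := by
  subst hm
  have hα : Finsupp.equivFunOnFinite.symm e = hookExponent n k := by
    ext y
    rw [hookExponent, Finsupp.coe_equivFunOnFinite_symm, Finsupp.coe_equivFunOnFinite_symm, he]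
    rcases eq_or_ne y 0 with rfl | hy
    · simp
    · rw [if_neg (Fin.val_ne_zero_iff.mpr hy), if_neg hy, val_tailRev_of_ne_zero hy]
  rw [hα, prod_X_sub_X_eq_sum_sign_smul, sum_mul, coeff_sum,
    ← Equiv.sum_comp (Equiv.mulRight (finRotate (k + 1))), ← sum_sign_mul_coeff_hook hkn w,
    mul_sum]
  refine Fintype.sum_congr _ _ fun π => ?_
  rw [smul_mul_assoc, coeff_smul, Equiv.coe_mulRight, Perm.sign_mul, sign_finRotate,
    Units.smul_def]
  push_cast
  rw [smul_eq_mul, mul_comm (sign π : ℤ), mul_assoc]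
  rfl

end Hook

theorem stmt12 (n k : ℕ) (hnk : 2 * k ≤ n) (w : Equiv.Perm (Fin n)) :
    chiFrob w ((n - k) :: List.replicate k 1) =
      (-1 : ℤ) ^ k *
        ∑ j ∈ Finset.range (k + 1),
          ∑ μ : Composition j, (-1 : ℤ) ^ μ.length * zeta w μ.blocks := by
  refine coeff_vandermonde_mul_cyclePowerSum_hook (by omega) w (by simp) _ ?_
  rintro ⟨_ | i, hi⟩ <;>
    simp only [List.get_eq_getElem, List.length_cons, List.length_replicate] at hi ⊢
  · simp only [List.getElem_cons_zero, if_pos]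
    omega
  · simp only [List.getElem_cons_succ, List.getElem_replicate, Nat.add_one_ne_zero, if_false]
    omega
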